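/- Let ρ₀ be the unique element of ℰ̄¹ vanishing identically on 𝒢. For e ∈ M̄ the following are equivalent: (1) there exists ρ ∈ ℰ̄¹ with e ∈ ℜ_ρ(ℰ̄), ⟨ρ₀, e⟩ = 0 and ⟨ρ, α⟩ = 0; (2) e ∈ M, α^∨(e) ≥ 0 and e ∈ ℜ(ℰ), where ℰ = 𝒢^∨ ⊆ N_ℚ is the dual cone of 𝒢 inside N_ℚ = Hom_ℤ(M,ℤ) ⊗ ℚ. -/

import Mathlib

open scoped BigOperators

namespace RootSubgroups

/-- The natural pairing on `ℚⁿ`, identifying `N_ℚ` with the dual of `M_ℚ`. -/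
def pairQ {n : ℕ} (q v : Fin n → ℚ) : ℚ := ∑ i, q i * v i

/-- A vector of `M_ℚ = ℚⁿ` is a lattice point (lies in `M = ℤⁿ`) if all its
coordinates are integers. -/
def IsLatticePt {n : ℕ} (v : Fin n → ℚ) : Prop := ∀ i, ∃ z : ℤ, v i = (z : ℚ)

/-- The convex cone generated by a set `S ⊆ ℚⁿ`: all finite nonnegative
rational combinations of elements of `S`. -/
def coneHull {n : ℕ} (S : Set (Fin n → ℚ)) : Set (Fin n → ℚ) :=
  {x | ∃ (F : Finset (Fin n → ℚ)) (c : (Fin n → ℚ) → ℚ),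
      (F : Set (Fin n → ℚ)) ⊆ S ∧ (∀ v, 0 ≤ c v) ∧ x = ∑ v ∈ F, c v • v}

/-- A finitely generated convex cone: the cone generated by a finite set. -/
def IsFGCone {n : ℕ} (C : Set (Fin n → ℚ)) : Prop :=
  ∃ S : Finset (Fin n → ℚ), C = coneHull (S : Set (Fin n → ℚ))

/-- The dual cone `ℰ = 𝒢^∨ = {q : ⟨q, v⟩ ≥ 0 for all v ∈ 𝒢}`. -/
def dualCone {n : ℕ} (C : Set (Fin n → ℚ)) : Set (Fin n → ℚ) :=
  {q | ∀ v ∈ C, 0 ≤ pairQ q v}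

/-- A face of the dual cone `ℰ = C^∨`: a subset of the form
`{q ∈ ℰ : ⟨q, v⟩ = 0}` for some `v ∈ C`. -/
def IsFaceOfDual {n : ℕ} (C F : Set (Fin n → ℚ)) : Prop :=
  ∃ v ∈ C, F = {q ∈ dualCone C | pairQ q v = 0}

/-- The ray `ℚ_{≥0}·ρ` spanned by a vector `ρ`. -/
def raySet {n : ℕ} (ρ : Fin n → ℚ) : Set (Fin n → ℚ) :=
  {x | ∃ c : ℚ, 0 ≤ c ∧ x = c • ρ}

/-- A lattice vector is primitive if it is not a positive integer multiple
`k·q` (`k ≠ 1`) of a lattice vector `q`. -/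
def IsPrimitive {n : ℕ} (ρ : Fin n → ℚ) : Prop :=
  IsLatticePt ρ ∧ ∀ (k : ℕ) (q : Fin n → ℚ), IsLatticePt q → ρ = (k : ℚ) • q → k = 1

/-- `ℰ¹`: the set of primitive lattice vectors `ρ ∈ N` such that `ℚ_{≥0}·ρ` is
a ray (one-dimensional face) of the dual cone `ℰ = C^∨`. -/
def E1 {n : ℕ} (C : Set (Fin n → ℚ)) : Set (Fin n → ℚ) :=
  {ρ | IsPrimitive ρ ∧ IsFaceOfDual C (raySet ρ)}

/-- The Demazure roots of `ℰ = C^∨` at `ρ ∈ ℰ¹`: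
`ℜ_ρ(ℰ) = {e ∈ M : ⟨ρ, e⟩ = −1 and ⟨ρ', e⟩ ≥ 0 for all ρ' ∈ ℰ¹ \ {ρ}}`. -/
def DemRootsAt {n : ℕ} (C : Set (Fin n → ℚ)) (ρ : Fin n → ℚ) : Set (Fin n → ℚ) :=
  {e | IsLatticePt e ∧ pairQ ρ e = -1 ∧ ∀ ρ' ∈ E1 C, ρ' ≠ ρ → 0 ≤ pairQ ρ' e}

/-- The set `ℜ(ℰ)` of all Demazure roots of `ℰ = C^∨`. -/
def DemRoots {n : ℕ} (C : Set (Fin n → ℚ)) : Set (Fin n → ℚ) :=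
  ⋃ ρ ∈ E1 C, DemRootsAt C ρ

/-- A face of the cone `C`: a subset of the form `{v ∈ C : ⟨q, v⟩ = 0}` for
some `q` in the dual cone of `C`. -/
def IsFaceOfCone {n : ℕ} (C F : Set (Fin n → ℚ)) : Prop :=
  ∃ q ∈ dualCone C, F = {v ∈ C | pairQ q v = 0}

/-- A facet of the cone `C`: a face whose linear span has codimension one in
the linear span of `C`. -/
def IsFacetOfCone {n : ℕ} (C F : Set (Fin n → ℚ)) : Prop :=
  IsFaceOfCone C F ∧
    Module.finrank ℚ ↥(Submodule.span ℚ F) + 1 = Module.finrank ℚ ↥(Submodule.span ℚ C)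

end RootSubgroups

namespace RootSubgroups

/-- The embedding of `M_ℚ = ℚⁿ` into `M̄_ℚ = ℚ^{n+1}`, where the last
coordinate is the coefficient of the extra basis element `α`. -/
def emb {n : ℕ} (v : Fin n → ℚ) : Fin (n + 1) → ℚ := Fin.snoc v 0

/-- The extra basis element `α` of `M̄ = M ⊕ ℤα`. -/
def alphaVec (n : ℕ) : Fin (n + 1) → ℚ := Fin.snoc 0 1

/-- The involution `w(x) = x − α^∨(x)·α` of `M̄_ℚ`, where the homomorphism
`α^∨ : M̄ → ℤ` is represented by pairing with a lattice vector `ac ∈ N̄`. -/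
def wmap {n : ℕ} (ac : Fin (n + 1) → ℚ) (x : Fin (n + 1) → ℚ) : Fin (n + 1) → ℚ :=
  x - pairQ ac x • alphaVec n

/-- The cone `𝒢̄ ⊆ M̄_ℚ` generated by `𝒢 ∪ w(𝒢)`. -/
def barCone {n : ℕ} (ac : Fin (n + 1) → ℚ) (C : Set (Fin n → ℚ)) :
    Set (Fin (n + 1) → ℚ) :=
  coneHull (emb '' C ∪ wmap ac '' (emb '' C))

end RootSubgroups

namespace RootSubgroups

/-! ### Auxiliary lemmas -/

section Aux

variable {n : ℕ}

/-- Projection `M̄_ℚ → M_ℚ` dropping the last coordinate. -/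
def proj (p : Fin (n + 1) → ℚ) : Fin n → ℚ := fun i => p i.castSucc

lemma pairQ_add_right (q v w : Fin n → ℚ) : pairQ q (v + w) = pairQ q v + pairQ q w := by
  simp [pairQ, mul_add, Finset.sum_add_distrib]

lemma pairQ_smul_right (q v : Fin n → ℚ) (c : ℚ) : pairQ q (c • v) = c * pairQ q v := by
  simp only [pairQ, Pi.smul_apply, smul_eq_mul, Finset.mul_sum]
  exact Finset.sum_congr rfl fun i _ => by ring

lemma pairQ_sub_right (q v w : Fin n → ℚ) : pairQ q (v - w) = pairQ q v - pairQ q w := by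
  simp [pairQ, mul_sub, Finset.sum_sub_distrib]

lemma pairQ_add_left (q p v : Fin n → ℚ) : pairQ (q + p) v = pairQ q v + pairQ p v := by
  simp [pairQ, add_mul, Finset.sum_add_distrib]

lemma pairQ_sub_left (q p v : Fin n → ℚ) : pairQ (q - p) v = pairQ q v - pairQ p v := by
  simp [pairQ, sub_mul, Finset.sum_sub_distrib]

lemma pairQ_smul_left (q v : Fin n → ℚ) (c : ℚ) : pairQ (c • q) v = c * pairQ q v := by
  simp only [pairQ, Pi.smul_apply, smul_eq_mul, Finset.mul_sum]
  exact Finset.sum_congr rfl fun i _ => by ring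

lemma pairQ_neg_left (q v : Fin n → ℚ) : pairQ (-q) v = -pairQ q v := by
  simp [pairQ, Finset.sum_neg_distrib]

lemma pairQ_zero_right (q : Fin n → ℚ) : pairQ q 0 = 0 := by simp [pairQ]

lemma pairQ_split (p v : Fin (n + 1) → ℚ) :
    pairQ p v = pairQ (proj p) (proj v) + p (Fin.last n) * v (Fin.last n) := by
  simp [pairQ, proj, Fin.sum_univ_castSucc]

lemma pairQ_emb (p : Fin (n + 1) → ℚ) (v : Fin n → ℚ) :
    pairQ p (emb v) = pairQ (proj p) v := by
  rw [pairQ_split]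
  simp [emb, proj, pairQ]

lemma pairQ_alpha_right (p : Fin (n + 1) → ℚ) :
    pairQ p (alphaVec n) = p (Fin.last n) := by
  rw [pairQ_split]
  simp [alphaVec, proj, pairQ]

lemma pairQ_alpha_left (v : Fin (n + 1) → ℚ) :
    pairQ (alphaVec n) v = v (Fin.last n) := by
  rw [pairQ_split]
  simp [alphaVec, proj, pairQ]

lemma emb_proj (p : Fin (n + 1) → ℚ) (h : p (Fin.last n) = 0) : emb (proj p) = p := by
  funext i
  induction i using Fin.lastCases with
  | last => simp [emb, h]
  | cast i => simp [emb, proj]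

lemma proj_emb (v : Fin n → ℚ) : proj (emb v) = v := by
  funext i; simp [emb, proj]

lemma emb_last (v : Fin n → ℚ) : emb v (Fin.last n) = 0 := by simp [emb]

lemma emb_add (v w : Fin n → ℚ) : emb (v + w) = emb v + emb w := by
  funext i
  induction i using Fin.lastCases with
  | last => simp [emb]
  | cast i => simp [emb]

lemma emb_smul (c : ℚ) (v : Fin n → ℚ) : emb (c • v) = c • emb v := by
  funext i
  induction i using Fin.lastCases with
  | last => simp [emb]
  | cast i => simp [emb]

lemma proj_add (v w : Fin (n + 1) → ℚ) : proj (v + w) = proj v + proj w := rfl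

lemma proj_smul (c : ℚ) (v : Fin (n + 1) → ℚ) : proj (c • v) = c • proj v := rfl

/-- Induction principle for membership in a cone hull. -/
lemma coneHull_induction {S : Set (Fin n → ℚ)} {x : Fin n → ℚ}
    {P : (Fin n → ℚ) → Prop} (hx : x ∈ coneHull S) (h0 : P 0)
    (hadd : ∀ y z, P y → P z → P (y + z))
    (hsmul : ∀ (c : ℚ) v, 0 ≤ c → v ∈ S → P (c • v)) : P x := by
  obtain ⟨F, c, hFS, hc, rfl⟩ := hx
  induction F using Finset.induction with
  | empty => simpa using h0
  | insert _ _ hvF ih =>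
    rename_i v F
    rw [Finset.sum_insert hvF]
    refine hadd _ _ (hsmul _ _ (hc v) (hFS (by simp))) (ih ?_)
    exact fun u hu => hFS (by simp [hu])

lemma mem_coneHull_self {S : Set (Fin n → ℚ)} {v : Fin n → ℚ} (hv : v ∈ S) :
    v ∈ coneHull S := by
  refine ⟨{v}, fun _ => 1, by simpa using hv, fun _ => zero_le_one, by simp⟩

lemma zero_mem_coneHull (S : Set (Fin n → ℚ)) : (0 : Fin n → ℚ) ∈ coneHull S := by
  refine ⟨∅, fun _ => 0, by simp, fun _ => le_rfl, by simp⟩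

lemma smul_mem_coneHull {S : Set (Fin n → ℚ)} {x : Fin n → ℚ} {t : ℚ}
    (ht : 0 ≤ t) (hx : x ∈ coneHull S) : t • x ∈ coneHull S := by
  obtain ⟨F, c, hFS, hc, rfl⟩ := hx
  refine ⟨F, fun u => t * c u, hFS, fun u => mul_nonneg ht (hc u), ?_⟩
  rw [Finset.smul_sum]
  exact Finset.sum_congr rfl fun u _ => by dsimp only; rw [smul_smul]

lemma add_mem_coneHull {S : Set (Fin n → ℚ)} {x y : Fin n → ℚ}
    (hx : x ∈ coneHull S) (hy : y ∈ coneHull S) : x + y ∈ coneHull S := by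
  classical
  obtain ⟨F, c, hFS, hc, rfl⟩ := hx
  obtain ⟨G, d, hGS, hd, rfl⟩ := hy
  refine ⟨F ∪ G, fun u => (if u ∈ F then c u else 0) + (if u ∈ G then d u else 0),
    ?_, ?_, ?_⟩
  · intro u hu
    rcases Finset.mem_union.mp hu with h | h
    exacts [hFS h, hGS h]
  · intro u
    have h1 : (0:ℚ) ≤ if u ∈ F then c u else 0 := by split; exacts [hc u, le_rfl]
    have h2 : (0:ℚ) ≤ if u ∈ G then d u else 0 := by split; exacts [hd u, le_rfl]
    exact add_nonneg h1 h2
  · show _ = ∑ u ∈ F ∪ G, ((if u ∈ F then c u else 0) + (if u ∈ G then d u else 0)) • u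
    have key : ∀ (H : Finset (Fin n → ℚ)) (e : (Fin n → ℚ) → ℚ), H ⊆ F ∪ G →
        (∑ u ∈ F ∪ G, (if u ∈ H then e u else 0) • u) = ∑ u ∈ H, e u • u := by
      intro H e hH
      rw [← Finset.sum_subset hH (fun u _ hu => by simp [hu])]
      exact Finset.sum_congr rfl fun u hu => by simp [Finset.mem_of_mem_filter, hu]
    calc (∑ u ∈ F, c u • u) + ∑ u ∈ G, d u • u
        = (∑ u ∈ F ∪ G, (if u ∈ F then c u else 0) • u)
          + ∑ u ∈ F ∪ G, (if u ∈ G then d u else 0) • u := by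
          rw [key F c Finset.subset_union_left, key G d Finset.subset_union_right]
      _ = _ := by
          rw [← Finset.sum_add_distrib]
          exact Finset.sum_congr rfl fun u _ => (add_smul _ _ _).symm

lemma coneHull_mono {S T : Set (Fin n → ℚ)} (h : S ⊆ T) : coneHull S ⊆ coneHull T :=
  fun x ⟨F, c, hFS, hc, hx⟩ => ⟨F, c, hFS.trans h, hc, hx⟩

lemma coneHull_coneHull (S : Set (Fin n → ℚ)) : coneHull (coneHull S) = coneHull S := by
  refine Set.Subset.antisymm (fun x hx => ?_) (fun x hx => mem_coneHull_self hx)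
  refine coneHull_induction hx (zero_mem_coneHull S)
    (fun y z hy hz => add_mem_coneHull hy hz)
    (fun c v hc hv => smul_mem_coneHull hc hv)

lemma mem_dualCone_coneHull {S : Set (Fin n → ℚ)} {q : Fin n → ℚ} :
    q ∈ dualCone (coneHull S) ↔ ∀ v ∈ S, 0 ≤ pairQ q v := by
  constructor
  · intro hq v hv; exact hq v (mem_coneHull_self hv)
  · intro hq v hv
    refine coneHull_induction (P := fun x => 0 ≤ pairQ q x) hv ?_ ?_ ?_
    · simp [pairQ_zero_right]
    · intro y z hy hz; rw [pairQ_add_right]; exact add_nonneg hy hz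
    · intro c u hc hu; rw [pairQ_smul_right]; exact mul_nonneg hc (hq u hu)

end Aux


section Aux2

variable {n : ℕ}

lemma pairQ_wmap (ac p x : Fin (n + 1) → ℚ) :
    pairQ p (wmap ac x) = pairQ p x - pairQ ac x * p (Fin.last n) := by
  rw [wmap, pairQ_sub_right, pairQ_smul_right, pairQ_alpha_right]

lemma wmap_wmap {ac : Fin (n + 1) → ℚ} (haca : pairQ ac (alphaVec n) = 2)
    (x : Fin (n + 1) → ℚ) : wmap ac (wmap ac x) = x := by
  have h : pairQ ac (wmap ac x) = -pairQ ac x := by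
    rw [pairQ_wmap]
    rw [pairQ_alpha_right] at haca
    rw [haca]; ring
  rw [wmap, h, wmap]
  funext i
  simp

lemma isLatticePt_zero : IsLatticePt (0 : Fin n → ℚ) := fun _ => ⟨0, by simp⟩

lemma isLatticePt_emb {v : Fin n → ℚ} (hv : IsLatticePt v) : IsLatticePt (emb v) := by
  intro i
  induction i using Fin.lastCases with
  | last => exact ⟨0, by simp [emb]⟩
  | cast i => obtain ⟨z, hz⟩ := hv i; exact ⟨z, by simpa [emb] using hz⟩

lemma isLatticePt_proj {p : Fin (n + 1) → ℚ} (hp : IsLatticePt p) :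
    IsLatticePt (proj p) := fun i => hp i.castSucc

lemma isLatticePt_alpha : IsLatticePt (alphaVec n) := by
  intro i
  induction i using Fin.lastCases with
  | last => exact ⟨1, by simp [alphaVec]⟩
  | cast i => exact ⟨0, by simp [alphaVec]⟩

lemma isLatticePt_sub {p q : Fin n → ℚ} (hp : IsLatticePt p) (hq : IsLatticePt q) :
    IsLatticePt (p - q) := by
  intro i
  obtain ⟨z, hz⟩ := hp i
  obtain ⟨w, hw⟩ := hq i
  exact ⟨z - w, by push_cast [Pi.sub_apply, hz, hw]; ring⟩

lemma isLatticePt_neg {p : Fin n → ℚ} (hp : IsLatticePt p) : IsLatticePt (-p) := by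
  intro i
  obtain ⟨z, hz⟩ := hp i
  exact ⟨-z, by push_cast [Pi.neg_apply, hz]; ring⟩

lemma IsPrimitive.ne_zero {ρ : Fin n → ℚ} (hp : IsPrimitive ρ) : ρ ≠ 0 := by
  intro h
  have := hp.2 0 0 isLatticePt_zero (by rw [h]; simp)
  simp at this

lemma IsPrimitive.emb {ρ : Fin n → ℚ} (hp : IsPrimitive ρ) : IsPrimitive (RootSubgroups.emb ρ) := by
  refine ⟨isLatticePt_emb hp.1, fun k q hq h => ?_⟩
  refine hp.2 k (proj q) (isLatticePt_proj hq) ?_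
  have := congrArg proj h
  rwa [proj_emb, proj_smul] at this

lemma IsPrimitive.proj {ρ : Fin (n + 1) → ℚ} (hp : IsPrimitive ρ)
    (h0 : ρ (Fin.last n) = 0) : IsPrimitive (proj ρ) := by
  refine ⟨isLatticePt_proj hp.1, fun k q hq h => ?_⟩
  refine hp.2 k (RootSubgroups.emb q) (isLatticePt_emb hq) ?_
  rw [← emb_proj ρ h0, h, emb_smul]

lemma self_mem_raySet (ρ : Fin n → ℚ) : ρ ∈ raySet ρ :=
  ⟨1, zero_le_one, (one_smul _ _).symm⟩

lemma mem_dual_of_E1 {C : Set (Fin n → ℚ)} {ρ : Fin n → ℚ} (h : ρ ∈ E1 C) :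
    ρ ∈ dualCone C := by
  obtain ⟨v, hv, hface⟩ := h.2
  have hρ := self_mem_raySet ρ
  rw [hface] at hρ
  exact hρ.1

lemma E1.pair_witness_zero {C : Set (Fin n → ℚ)} {ρ v : Fin n → ℚ}
    (hface : raySet ρ = {q ∈ dualCone C | pairQ q v = 0}) : pairQ ρ v = 0 := by
  have hρ := self_mem_raySet ρ
  rw [hface] at hρ
  exact hρ.2

lemma mem_barDual {C : Set (Fin n → ℚ)} {ac p : Fin (n + 1) → ℚ} :
    p ∈ dualCone (barCone ac C) ↔
      (∀ v ∈ C, 0 ≤ pairQ p (emb v)) ∧ ∀ v ∈ C, 0 ≤ pairQ p (wmap ac (emb v)) := by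
  rw [barCone, mem_dualCone_coneHull]
  constructor
  · intro h
    exact ⟨fun v hv => h _ (Or.inl ⟨v, hv, rfl⟩),
      fun v hv => h _ (Or.inr ⟨emb v, ⟨v, hv, rfl⟩, rfl⟩)⟩
  · rintro ⟨h1, h2⟩ u hu
    simp only [Set.mem_union, Set.mem_image] at hu
    rcases hu with ⟨v, hv, rfl⟩ | ⟨u', ⟨v, hv, rfl⟩, rfl⟩
    exacts [h1 v hv, h2 v hv]

end Aux2


section Aux3

variable {n : ℕ}

lemma smul_mem_dualCone {D : Set (Fin n → ℚ)} {p : Fin n → ℚ}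
    (hp : p ∈ dualCone D) {c : ℚ} (hc : 0 ≤ c) : c • p ∈ dualCone D := by
  intro v hv
  rw [pairQ_smul_left]
  exact mul_nonneg hc (hp v hv)

lemma pairQ_single (q : Fin n → ℚ) (i : Fin n) : pairQ q (Pi.single i 1) = q i := by
  simp [pairQ, Pi.single_apply, mul_ite]

lemma nat_eq_one_of_mul_int {k : ℕ} {z : ℤ} (h : (k : ℚ) * (z : ℚ) = 1) : k = 1 := by
  have hz : (k : ℤ) * z = 1 := by exact_mod_cast h
  have := Int.eq_one_of_mul_eq_one_right (by positivity) hz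
  exact_mod_cast this

lemma eq_zero_of_last_proj {p : Fin (n + 1) → ℚ} (h0 : proj p = 0)
    (hl : p (Fin.last n) = 0) : p = 0 := by
  funext i
  induction i using Fin.lastCases with
  | last => exact hl
  | cast i => exact congrFun h0 i

/-- The linear functional `v ↦ pairQ q v`. -/
def pairL (q : Fin n → ℚ) : (Fin n → ℚ) →ₗ[ℚ] ℚ where
  toFun v := pairQ q v
  map_add' v w := pairQ_add_right q v w
  map_smul' c v := by simp [pairQ_smul_right]

lemma proj_eq_zero_of_vanish {C : Set (Fin n → ℚ)} (hfull : Submodule.span ℚ C = ⊤)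
    {p : Fin (n + 1) → ℚ} (hvan : ∀ v ∈ C, pairQ p (emb v) = 0) : proj p = 0 := by
  have hker : ∀ x : Fin n → ℚ, pairL (proj p) x = 0 := by
    intro x
    have hle : Submodule.span ℚ C ≤ LinearMap.ker (pairL (proj p)) := by
      rw [Submodule.span_le]
      intro v hv
      have := hvan v hv
      rw [pairQ_emb] at this
      exact this
    rw [hfull] at hle
    exact hle (Submodule.mem_top (R := ℚ) (x := x))
  funext i
  have := hker (Pi.single i 1)
  rwa [show pairL (proj p) (Pi.single i 1) = pairQ (proj p) (Pi.single i 1) from rfl,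
    pairQ_single] at this

lemma emb_mem_barDual {C : Set (Fin n → ℚ)} {ac : Fin (n + 1) → ℚ} {q : Fin n → ℚ}
    (hq : q ∈ dualCone C) : emb q ∈ dualCone (barCone ac C) := by
  rw [mem_barDual]
  constructor
  · intro v hv; rw [pairQ_emb, proj_emb]; exact hq v hv
  · intro v hv
    rw [pairQ_wmap, emb_last, mul_zero, sub_zero, pairQ_emb, proj_emb]
    exact hq v hv

lemma abar_mem_barDual {C : Set (Fin n → ℚ)} {ac : Fin (n + 1) → ℚ}
    (haca : pairQ ac (alphaVec n) = 2) (hnn : ∀ v ∈ C, 0 ≤ pairQ ac (emb v)) :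
    (ac - alphaVec n) ∈ dualCone (barCone ac C) := by
  have aL : ac (Fin.last n) = 2 := by rwa [pairQ_alpha_right] at haca
  rw [mem_barDual]
  constructor
  · intro v hv
    rw [pairQ_sub_left, pairQ_alpha_left, emb_last, sub_zero]
    exact hnn v hv
  · intro v hv
    have hlast : (ac - alphaVec n) (Fin.last n) = 1 := by
      simp [aL, alphaVec]
      norm_num
    rw [pairQ_wmap, hlast, mul_one, pairQ_sub_left, pairQ_alpha_left, emb_last, sub_zero,
      sub_self]

lemma negalpha_mem_barDual {C : Set (Fin n → ℚ)} {ac : Fin (n + 1) → ℚ}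
    (hnn : ∀ v ∈ C, 0 ≤ pairQ ac (emb v)) :
    (-alphaVec n) ∈ dualCone (barCone ac C) := by
  rw [mem_barDual]
  have hlast : (-alphaVec n) (Fin.last n) = -1 := by simp [alphaVec]
  constructor
  · intro v hv
    rw [pairQ_neg_left, pairQ_alpha_left, emb_last, neg_zero]
  · intro v hv
    rw [pairQ_wmap, hlast, pairQ_neg_left, pairQ_alpha_left, emb_last, neg_zero]
    have := hnn v hv
    linarith

/-- The unique ray of `ℰ̄` vanishing on `𝒢` is spanned by `-α`. -/
lemma rho0_eq_neg_alpha {C : Set (Fin n → ℚ)} {ac ρ₀ : Fin (n + 1) → ℚ}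
    (hfull : Submodule.span ℚ C = ⊤)
    (hnn : ∀ v ∈ C, 0 ≤ pairQ ac (emb v)) (hnz : ∃ v ∈ C, pairQ ac (emb v) ≠ 0)
    (hρ₀ : ρ₀ ∈ E1 (barCone ac C)) (hρ₀van : ∀ v ∈ C, pairQ ρ₀ (emb v) = 0) :
    ρ₀ = -alphaVec n := by
  have hproj : proj ρ₀ = 0 := proj_eq_zero_of_vanish hfull hρ₀van
  obtain ⟨z, hz⟩ := hρ₀.1.1 (Fin.last n)
  have hzne : z ≠ 0 := by
    intro h
    exact hρ₀.1.ne_zero (eq_zero_of_last_proj hproj (by rw [hz, h]; norm_num))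
  have hzneg : z < 0 := by
    obtain ⟨v, hv, hvne⟩ := hnz
    have hA : 0 < pairQ ac (emb v) := lt_of_le_of_ne (hnn v hv) (Ne.symm hvne)
    have hd := (mem_barDual.mp (mem_dual_of_E1 hρ₀)).2 v hv
    rw [pairQ_wmap, hρ₀van v hv, zero_sub, hz] at hd
    have : (z : ℚ) ≤ 0 := by nlinarith
    have : z ≤ 0 := by exact_mod_cast this
    omega
  have hsm : ρ₀ = (z.natAbs : ℚ) • (-alphaVec n) := by
    funext i
    induction i using Fin.lastCases with
    | last =>
      have habs : (z.natAbs : ℚ) = -(z : ℚ) := by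
        rw [Nat.cast_natAbs, abs_of_neg hzneg]
        push_cast
        ring
      simp [hz, habs, alphaVec]
    | cast i =>
      have := congrFun hproj i
      simp only [proj] at this
      simp [this, alphaVec]
  have hone := hρ₀.1.2 z.natAbs (-alphaVec n) (isLatticePt_neg isLatticePt_alpha) hsm
  rw [hone] at hsm
  simpa using hsm

end Aux3


section Aux4

variable {n : ℕ}

/-- If `ρ'` spans a ray of `ℰ` whose witness facet is not contained in the
hyperplane `α^∨ = 0`, then `emb ρ'` spans a ray of `ℰ̄`. -/
lemma emb_mem_E1_bar {C : Set (Fin n → ℚ)} {ac : Fin (n + 1) → ℚ} {ρ' v' : Fin n → ℚ}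
    (hprim : IsPrimitive ρ') (hρ'dual : ρ' ∈ dualCone C) (hv'C : v' ∈ C)
    (hface : raySet ρ' = {q ∈ dualCone C | pairQ q v' = 0})
    (hav : pairQ ac (emb v') ≠ 0) :
    emb ρ' ∈ E1 (barCone ac C) := by
  refine ⟨hprim.emb, emb v' + wmap ac (emb v'), ?_, ?_⟩
  · exact add_mem_coneHull
      (mem_coneHull_self (Or.inl ⟨v', hv'C, rfl⟩))
      (mem_coneHull_self (Or.inr ⟨emb v', ⟨v', hv'C, rfl⟩, rfl⟩))
  · have hz : pairQ ρ' v' = 0 := E1.pair_witness_zero hface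
    ext p
    constructor
    · rintro ⟨c, hc, rfl⟩
      refine ⟨smul_mem_dualCone (emb_mem_barDual hρ'dual) hc, ?_⟩
      rw [pairQ_smul_left, pairQ_add_right, pairQ_wmap, emb_last, mul_zero, sub_zero,
        pairQ_emb, proj_emb, hz]
      ring
    · rintro ⟨hpdual, hpv⟩
      have h1 : 0 ≤ pairQ p (emb v') := (mem_barDual.mp hpdual).1 v' hv'C
      have h2 : 0 ≤ pairQ p (wmap ac (emb v')) := (mem_barDual.mp hpdual).2 v' hv'C
      rw [pairQ_add_right] at hpv
      have h1' : pairQ p (emb v') = 0 := by linarith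
      have h2' : pairQ p (wmap ac (emb v')) = 0 := by linarith
      have hplast : p (Fin.last n) = 0 := by
        rw [pairQ_wmap, h1', zero_sub, neg_eq_zero, mul_eq_zero] at h2'
        tauto
      have hpdualC : proj p ∈ dualCone C := by
        intro v hv
        rw [← pairQ_emb]
        exact (mem_barDual.mp hpdual).1 v hv
      have hpray : proj p ∈ raySet ρ' := by
        rw [hface]
        exact ⟨hpdualC, by rwa [← pairQ_emb]⟩
      obtain ⟨c, hc, hcp⟩ := hpray
      exact ⟨c, hc, by rw [← emb_proj p hplast, hcp, emb_smul]⟩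

/-- The reflection `σ = w^*` on the dual space. -/
def sig (ac p : Fin (n + 1) → ℚ) : Fin (n + 1) → ℚ := p - p (Fin.last n) • ac

lemma pairQ_sig (ac p x : Fin (n + 1) → ℚ) :
    pairQ (sig ac p) x = pairQ p (wmap ac x) := by
  rw [sig, pairQ_sub_left, pairQ_smul_left, pairQ_wmap]
  ring

lemma sig_last {ac : Fin (n + 1) → ℚ} (haca : pairQ ac (alphaVec n) = 2)
    (p : Fin (n + 1) → ℚ) : sig ac p (Fin.last n) = -p (Fin.last n) := by
  have aL : ac (Fin.last n) = 2 := by rwa [pairQ_alpha_right] at haca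
  simp [sig, aL]
  ring

lemma sig_sig {ac : Fin (n + 1) → ℚ} (haca : pairQ ac (alphaVec n) = 2)
    (p : Fin (n + 1) → ℚ) : sig ac (sig ac p) = p := by
  rw [sig, sig_last haca, sig, neg_smul, sub_neg_eq_add]
  abel

lemma sig_smul (ac : Fin (n + 1) → ℚ) (c : ℚ) (p : Fin (n + 1) → ℚ) :
    sig ac (c • p) = c • sig ac p := by
  simp [sig, smul_sub, smul_smul]

lemma sig_neg_alpha {ac : Fin (n + 1) → ℚ} :
    sig ac (-alphaVec n) = ac - alphaVec n := by
  have : (-alphaVec n) (Fin.last n) = -1 := by simp [alphaVec]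
  rw [sig, this, neg_smul, one_smul, sub_neg_eq_add]
  abel

lemma sig_mem_barDual {C : Set (Fin n → ℚ)} {ac : Fin (n + 1) → ℚ}
    (haca : pairQ ac (alphaVec n) = 2) {p : Fin (n + 1) → ℚ}
    (hp : p ∈ dualCone (barCone ac C)) : sig ac p ∈ dualCone (barCone ac C) := by
  rw [mem_barDual] at hp ⊢
  constructor
  · intro v hv
    rw [pairQ_sig]
    exact hp.2 v hv
  · intro v hv
    rw [pairQ_sig, wmap_wmap haca]
    exact hp.1 v hv

lemma wmap_zero {ac : Fin (n + 1) → ℚ} : wmap ac 0 = 0 := by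
  simp [wmap, pairQ_zero_right]

lemma wmap_add (ac x y : Fin (n + 1) → ℚ) : wmap ac (x + y) = wmap ac x + wmap ac y := by
  rw [wmap, wmap, wmap, pairQ_add_right, add_smul]
  abel

lemma wmap_smul (ac : Fin (n + 1) → ℚ) (c : ℚ) (x : Fin (n + 1) → ℚ) :
    wmap ac (c • x) = c • wmap ac x := by
  rw [wmap, wmap, pairQ_smul_right, smul_sub, smul_smul]

lemma wmap_mem_barCone {C : Set (Fin n → ℚ)} {ac : Fin (n + 1) → ℚ}
    (haca : pairQ ac (alphaVec n) = 2) {x : Fin (n + 1) → ℚ}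
    (hx : x ∈ barCone ac C) : wmap ac x ∈ barCone ac C := by
  refine coneHull_induction (P := fun y => wmap ac y ∈ barCone ac C) hx ?_ ?_ ?_
  · show wmap ac 0 ∈ barCone ac C
    rw [wmap_zero]; exact zero_mem_coneHull _
  · intro y z hy hz
    show wmap ac (y + z) ∈ barCone ac C
    rw [wmap_add]
    exact add_mem_coneHull hy hz
  · intro c v hc hv
    show wmap ac (c • v) ∈ barCone ac C
    rw [wmap_smul]
    refine smul_mem_coneHull hc ?_
    rcases hv with ⟨u, hu, rfl⟩ | ⟨u, ⟨u', hu', rfl⟩, rfl⟩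
    · exact mem_coneHull_self (Or.inr ⟨emb u, ⟨u, hu, rfl⟩, rfl⟩)
    · rw [wmap_wmap haca]
      exact mem_coneHull_self (Or.inl ⟨u', hu', rfl⟩)

/-- `ᾱ = ac - α` spans a ray of `ℰ̄`. -/
lemma abar_mem_E1_bar {C : Set (Fin n → ℚ)} {ac : Fin (n + 1) → ℚ}
    (hacL : IsLatticePt ac) (haca : pairQ ac (alphaVec n) = 2)
    (hnn : ∀ v ∈ C, 0 ≤ pairQ ac (emb v))
    (hR : -alphaVec n ∈ E1 (barCone ac C)) :
    (ac - alphaVec n) ∈ E1 (barCone ac C) := by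
  have aL : ac (Fin.last n) = 2 := by rwa [pairQ_alpha_right] at haca
  obtain ⟨v₀, hv₀, hface₀⟩ := hR.2
  constructor
  · refine ⟨isLatticePt_sub hacL isLatticePt_alpha, fun k q hq h => ?_⟩
    obtain ⟨z, hzq⟩ := hq (Fin.last n)
    have hlast : (ac - alphaVec n) (Fin.last n) = 1 := by
      simp [aL, alphaVec]; norm_num
    have : (1 : ℚ) = (k : ℚ) * (z : ℚ) := by
      rw [← hlast, h]
      simp [hzq]
    exact nat_eq_one_of_mul_int this.symm
  · refine ⟨wmap ac v₀, wmap_mem_barCone haca hv₀, ?_⟩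
    have hz₀ : pairQ (-alphaVec n) v₀ = 0 := E1.pair_witness_zero hface₀
    ext p
    constructor
    · rintro ⟨c, hc, rfl⟩
      refine ⟨smul_mem_dualCone (abar_mem_barDual haca hnn) hc, ?_⟩
      have : pairQ (sig ac (c • (ac - alphaVec n))) v₀ = 0 := by
        rw [sig_smul, ← sig_neg_alpha (ac := ac), sig_sig haca, pairQ_smul_left, hz₀,
          mul_zero]
      rwa [pairQ_sig] at this
    · rintro ⟨hpdual, hpv⟩
      have hsp : sig ac p ∈ raySet (-alphaVec n) := by
        rw [hface₀]
        refine ⟨sig_mem_barDual haca hpdual, ?_⟩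
        rwa [pairQ_sig]
      obtain ⟨c, hc, hcp⟩ := hsp
      refine ⟨c, hc, ?_⟩
      rw [← sig_sig haca p, hcp, sig_smul, sig_neg_alpha]

end Aux4


section Aux5

variable {n : ℕ}

lemma extreme_of_face {m : ℕ} {D : Set (Fin m → ℚ)} {τ vb : Fin m → ℚ} (hvb : vb ∈ D)
    (hface : raySet τ = {q ∈ dualCone D | pairQ q vb = 0})
    {x y : Fin m → ℚ} (hx : x ∈ dualCone D) (hy : y ∈ dualCone D)
    (hxy : x + y ∈ raySet τ) : x ∈ raySet τ ∧ y ∈ raySet τ := by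
  rw [hface] at hxy
  have h0 : pairQ x vb + pairQ y vb = 0 := by
    rw [← pairQ_add_left]
    exact hxy.2
  have hx0 : 0 ≤ pairQ x vb := hx vb hvb
  have hy0 : 0 ≤ pairQ y vb := hy vb hvb
  constructor
  · rw [hface]; exact ⟨hx, by linarith⟩
  · rw [hface]; exact ⟨hy, by linarith⟩

lemma coneHull_union_split {m : ℕ} {S T : Set (Fin m → ℚ)} {x : Fin m → ℚ}
    (hx : x ∈ coneHull (S ∪ T)) :
    ∃ y ∈ coneHull S, ∃ z ∈ coneHull T, x = y + z := by
  refine coneHull_induction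
    (P := fun x => ∃ y ∈ coneHull S, ∃ z ∈ coneHull T, x = y + z) hx ?_ ?_ ?_
  · exact ⟨0, zero_mem_coneHull _, 0, zero_mem_coneHull _, by simp⟩
  · rintro x₁ x₂ ⟨y₁, hy₁, z₁, hz₁, rfl⟩ ⟨y₂, hy₂, z₂, hz₂, rfl⟩
    exact ⟨y₁ + y₂, add_mem_coneHull hy₁ hy₂, z₁ + z₂, add_mem_coneHull hz₁ hz₂, by abel⟩
  · rintro c v hc (hv | hv)
    · exact ⟨c • v, smul_mem_coneHull hc (mem_coneHull_self hv), 0, zero_mem_coneHull _,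
        by simp⟩
    · exact ⟨0, zero_mem_coneHull _, c • v, smul_mem_coneHull hc (mem_coneHull_self hv),
        by simp⟩

lemma mem_coneHull_emb {C : Set (Fin n → ℚ)} (hC : coneHull C = C)
    {x : Fin (n + 1) → ℚ} (hx : x ∈ coneHull (emb '' C)) : ∃ z ∈ C, x = emb z := by
  refine coneHull_induction (P := fun x => ∃ z ∈ C, x = emb z) hx ?_ ?_ ?_
  · refine ⟨0, ?_, ?_⟩
    · rw [← hC]; exact zero_mem_coneHull _
    · funext i
      induction i using Fin.lastCases with
      | last => simp [emb]
      | cast i => simp [emb]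
  · rintro x₁ x₂ ⟨z₁, hz₁, rfl⟩ ⟨z₂, hz₂, rfl⟩
    refine ⟨z₁ + z₂, ?_, (emb_add z₁ z₂).symm⟩
    rw [← hC]
    exact add_mem_coneHull (mem_coneHull_self hz₁) (mem_coneHull_self hz₂)
  · rintro c v hc ⟨z, hz, rfl⟩
    refine ⟨c • z, ?_, (emb_smul c z).symm⟩
    rw [← hC]
    exact smul_mem_coneHull hc (mem_coneHull_self hz)

lemma wmap_coneHull_wimage {C : Set (Fin n → ℚ)} {ac : Fin (n + 1) → ℚ}
    (haca : pairQ ac (alphaVec n) = 2) {x : Fin (n + 1) → ℚ}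
    (hx : x ∈ coneHull (wmap ac '' (emb '' C))) :
    wmap ac x ∈ coneHull (emb '' C) := by
  refine coneHull_induction (P := fun y => wmap ac y ∈ coneHull (emb '' C)) hx ?_ ?_ ?_
  · show wmap ac 0 ∈ _
    rw [wmap_zero]; exact zero_mem_coneHull _
  · intro y z hy hz
    show wmap ac (y + z) ∈ _
    rw [wmap_add]
    exact add_mem_coneHull hy hz
  · rintro c v hc ⟨u, hu, rfl⟩
    show wmap ac (c • wmap ac u) ∈ _
    rw [wmap_smul, wmap_wmap haca]
    exact smul_mem_coneHull hc (mem_coneHull_self hu)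

/-- Classification of the rays of `ℰ̄`: they are `-α`, `ᾱ = ac - α`, and the
embeddings of rays of `ℰ`. -/
lemma classify_E1_bar {C : Set (Fin n → ℚ)} {ac : Fin (n + 1) → ℚ}
    (hfg : IsFGCone C) (hacL : IsLatticePt ac) (haca : pairQ ac (alphaVec n) = 2)
    (hnn : ∀ v ∈ C, 0 ≤ pairQ ac (emb v))
    {τ : Fin (n + 1) → ℚ} (hτ : τ ∈ E1 (barCone ac C)) :
    τ = -alphaVec n ∨ τ = ac - alphaVec n ∨ ∃ q ∈ E1 C, τ = emb q := by
  have aL : ac (Fin.last n) = 2 := by rwa [pairQ_alpha_right] at haca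
  obtain ⟨vb, hvb, hface⟩ := hτ.2
  have hτdual : τ ∈ dualCone (barCone ac C) := mem_dual_of_E1 hτ
  obtain ⟨z, hz⟩ := hτ.1.1 (Fin.last n)
  set s : ℚ := τ (Fin.last n) with hs
  rcases lt_trichotomy s 0 with hsneg | hszero | hspos
  · -- `τ = -α`
    left
    set x : Fin (n + 1) → ℚ := τ - s • alphaVec n with hxdef
    have hxlast : x (Fin.last n) = 0 := by simp [hxdef, alphaVec]; linarith
    have hxdual : x ∈ dualCone (barCone ac C) := by
      rw [mem_barDual]
      constructor
      · intro v hv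
        rw [hxdef, pairQ_sub_left, pairQ_smul_left, pairQ_alpha_left, emb_last, mul_zero,
          sub_zero]
        exact (mem_barDual.mp hτdual).1 v hv
      · intro v hv
        have hαw : pairQ (alphaVec n) (wmap ac (emb v)) = -pairQ ac (emb v) := by
          rw [pairQ_wmap, pairQ_alpha_left, emb_last]
          simp [alphaVec]
        rw [hxdef, pairQ_sub_left, pairQ_smul_left, hαw, pairQ_wmap]
        have := (mem_barDual.mp hτdual).1 v hv
        nlinarith [this]
    have hydual : (-s) • (-alphaVec n) ∈ dualCone (barCone ac C) :=
      smul_mem_dualCone (negalpha_mem_barDual hnn) (by linarith)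
    have hsum : x + (-s) • (-alphaVec n) ∈ raySet τ := by
      have : x + (-s) • (-alphaVec n) = τ := by
        rw [hxdef, neg_smul_neg, sub_add_cancel]
      rw [this]
      exact self_mem_raySet τ
    obtain ⟨hxray, hyray⟩ := extreme_of_face hvb hface hxdual hydual hsum
    obtain ⟨c, hc, hcx⟩ := hxray
    have hc0 : c = 0 := by
      have := congrFun hcx (Fin.last n)
      simp [hxlast] at this
      rcases this with h | h
      · exact h
      · rw [← hs] at h; exact absurd h (by linarith)
    rw [hc0, zero_smul] at hcx
    have hsz : s = (z : ℚ) := hz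
    have hzneg : z < 0 := by
      have : (z : ℚ) < 0 := by rw [← hsz]; exact hsneg
      exact_mod_cast this
    have hτs : τ = s • alphaVec n := by
      have h1 : τ - s • alphaVec n = 0 := by rw [← hxdef, ← hcx]
      exact sub_eq_zero.mp h1
    have habs : (z.natAbs : ℚ) = -(z : ℚ) := by
      rw [Nat.cast_natAbs, abs_of_neg hzneg]
      push_cast
      ring
    have hτabs : τ = (z.natAbs : ℚ) • (-alphaVec n) := by
      rw [hτs, hsz, habs, neg_smul_neg]
    have hone := hτ.1.2 z.natAbs (-alphaVec n) (isLatticePt_neg isLatticePt_alpha) hτabs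
    rw [hone] at hτabs
    simpa using hτabs
  · -- `τ = emb q` for a ray `q` of `ℰ`
    right; right
    have hlast0 : τ (Fin.last n) = 0 := by rw [← hs]; exact hszero
    have hCC : coneHull C = C := by
      obtain ⟨S, hS⟩ := hfg
      rw [hS, coneHull_coneHull]
    obtain ⟨y, hy, w, hw, hvbeq⟩ := coneHull_union_split hvb
    obtain ⟨z₁, hz₁C, hyz⟩ := mem_coneHull_emb hCC hy
    obtain ⟨z₂, hz₂C, hwz⟩ := mem_coneHull_emb hCC (wmap_coneHull_wimage haca hw)
    have hweq : w = wmap ac (emb z₂) := by rw [← hwz, wmap_wmap haca]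
    set q : Fin n → ℚ := proj τ with hq
    have hτemb : τ = emb q := (emb_proj τ hlast0).symm
    have hqdual : q ∈ dualCone C := by
      intro v hv
      have := (mem_barDual.mp hτdual).1 v hv
      rwa [pairQ_emb] at this
    have hp1 : pairQ τ (emb z₁) = pairQ q z₁ := by rw [pairQ_emb, ← hq]
    have hp2 : pairQ τ (wmap ac (emb z₂)) = pairQ q z₂ := by
      rw [pairQ_wmap, hlast0, mul_zero, sub_zero, pairQ_emb, ← hq]
    have hτvb : pairQ τ vb = 0 := E1.pair_witness_zero hface
    have hsum2 : pairQ q z₁ + pairQ q z₂ = 0 := by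
      rw [← hp1, ← hp2, ← pairQ_add_right, ← hweq, ← hyz, ← hvbeq]
      exact hτvb
    have hnn1 : 0 ≤ pairQ τ (emb z₁) := (mem_barDual.mp hτdual).1 z₁ hz₁C
    have hnn2 : 0 ≤ pairQ τ (wmap ac (emb z₂)) := (mem_barDual.mp hτdual).2 z₂ hz₂C
    rw [hp1] at hnn1
    rw [hp2] at hnn2
    have hq1 : pairQ q z₁ = 0 := by linarith
    have hq2 : pairQ q z₂ = 0 := by linarith
    have hzC : z₁ + z₂ ∈ C := by
      rw [← hCC]
      exact add_mem_coneHull (mem_coneHull_self hz₁C) (mem_coneHull_self hz₂C)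
    refine ⟨q, ⟨hτ.1.proj hlast0, z₁ + z₂, hzC, ?_⟩, hτemb⟩
    ext p
    constructor
    · rintro ⟨c, hc, rfl⟩
      refine ⟨smul_mem_dualCone hqdual hc, ?_⟩
      rw [pairQ_smul_left, pairQ_add_right, hq1, hq2]
      ring
    · rintro ⟨hpd, hp0⟩
      rw [pairQ_add_right] at hp0
      have ha1 : 0 ≤ pairQ p z₁ := hpd z₁ hz₁C
      have ha2 : 0 ≤ pairQ p z₂ := hpd z₂ hz₂C
      have hb1 : pairQ p z₁ = 0 := by linarith
      have hb2 : pairQ p z₂ = 0 := by linarith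
      have hembp : emb p ∈ raySet τ := by
        rw [hface]
        refine ⟨emb_mem_barDual hpd, ?_⟩
        rw [hvbeq, hyz, hweq, pairQ_add_right, pairQ_emb, proj_emb,
          pairQ_wmap, emb_last, mul_zero, sub_zero, pairQ_emb, proj_emb, hb1, hb2]
        ring
      obtain ⟨c, hc, hcp⟩ := hembp
      refine ⟨c, hc, ?_⟩
      have := congrArg proj hcp
      rwa [proj_emb, hτemb, ← emb_smul, proj_emb] at this
  · -- `τ = ac - α`
    right; left
    set ab : Fin (n + 1) → ℚ := ac - alphaVec n with hab
    have hablast : ab (Fin.last n) = 1 := by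
      simp [hab, aL, alphaVec]; norm_num
    set x : Fin (n + 1) → ℚ := τ - s • ab with hxdef
    have hxlast : x (Fin.last n) = 0 := by simp [hxdef, hablast]; linarith
    have habemb : ∀ v, pairQ ab (emb v) = pairQ ac (emb v) := by
      intro v
      rw [hab, pairQ_sub_left, pairQ_alpha_left, emb_last, sub_zero]
    have habw : ∀ v, pairQ ab (wmap ac (emb v)) = 0 := by
      intro v
      rw [pairQ_wmap, hablast, mul_one, habemb, sub_self]
    have hxdual : x ∈ dualCone (barCone ac C) := by
      rw [mem_barDual]
      constructor
      · intro v hv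
        have h2 := (mem_barDual.mp hτdual).2 v hv
        rw [pairQ_wmap] at h2
        rw [hxdef, pairQ_sub_left, pairQ_smul_left, habemb]
        nlinarith [h2]
      · intro v hv
        rw [hxdef, pairQ_sub_left, pairQ_smul_left, habw, mul_zero, sub_zero]
        exact (mem_barDual.mp hτdual).2 v hv
    have hydual : s • ab ∈ dualCone (barCone ac C) :=
      smul_mem_dualCone (abar_mem_barDual haca hnn) (by linarith)
    have hsum : x + s • ab ∈ raySet τ := by
      have : x + s • ab = τ := by rw [hxdef, sub_add_cancel]
      rw [this]
      exact self_mem_raySet τ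
    obtain ⟨hxray, hyray⟩ := extreme_of_face hvb hface hxdual hydual hsum
    obtain ⟨c, hc, hcx⟩ := hxray
    have hc0 : c = 0 := by
      have hl := congrFun hcx (Fin.last n)
      rw [hxlast] at hl
      have : c * s = 0 := by simpa [← hs] using hl.symm
      rcases mul_eq_zero.mp this with h | h
      · exact h
      · exact absurd h (by linarith)
    rw [hc0, zero_smul] at hcx
    have hτs : τ = s • ab := by
      have h1 : τ - s • ab = 0 := by rw [← hxdef, ← hcx]
      exact sub_eq_zero.mp h1
    have hsz : s = (z : ℚ) := hz
    have hzpos : 0 < z := by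
      have : (0:ℚ) < (z : ℚ) := by rw [← hsz]; exact hspos
      exact_mod_cast this
    have htn : (z.toNat : ℚ) = (z : ℚ) := by exact_mod_cast Int.toNat_of_nonneg hzpos.le
    have hτabs : τ = (z.toNat : ℚ) • ab := by rw [hτs, hsz, htn]
    have hone := hτ.1.2 z.toNat ab (isLatticePt_sub hacL isLatticePt_alpha) hτabs
    rw [hone] at hτabs
    simpa [hab] using hτabs

end Aux5

/-- Let `ρ₀` be the unique element of `ℰ̄¹` vanishing identically on `𝒢`.
For a lattice element `e ∈ M̄` the following are equivalent:
(1) there exists `ρ ∈ ℰ̄¹` with `e ∈ ℜ_ρ(ℰ̄)`, `⟨ρ₀, e⟩ = 0` and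
`⟨ρ, α⟩ = 0`;
(2) `e ∈ M`, `α^∨(e) ≥ 0` and `e ∈ ℜ(ℰ)`, where `ℰ = 𝒢^∨ ⊆ N_ℚ`. -/
theorem demazure_root_of_barCone_iff {n : ℕ} (hn : 1 ≤ n)
    (C : Set (Fin n → ℚ)) (hfg : IsFGCone C) (hfull : Submodule.span ℚ C = ⊤)
    (ac : Fin (n + 1) → ℚ) (hacL : IsLatticePt ac)
    (haca : pairQ ac (alphaVec n) = 2)
    (hnn : ∀ v ∈ C, 0 ≤ pairQ ac (emb v))
    (hnz : ∃ v ∈ C, pairQ ac (emb v) ≠ 0)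
    (ρ₀ : Fin (n + 1) → ℚ) (hρ₀ : ρ₀ ∈ E1 (barCone ac C))
    (hρ₀van : ∀ v ∈ C, pairQ ρ₀ (emb v) = 0)
    (e : Fin (n + 1) → ℚ) (heL : IsLatticePt e) :
    (∃ ρ ∈ E1 (barCone ac C), e ∈ DemRootsAt (barCone ac C) ρ ∧
        pairQ ρ₀ e = 0 ∧ pairQ ρ (alphaVec n) = 0) ↔
    ((∃ e' : Fin n → ℚ, e = emb e' ∧ e' ∈ DemRoots C) ∧ 0 ≤ pairQ ac e) := by
  have hρ₀eq : ρ₀ = -alphaVec n := rho0_eq_neg_alpha hfull hnn hnz hρ₀ hρ₀van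
  have aL : ac (Fin.last n) = 2 := by rwa [pairQ_alpha_right] at haca
  have habar : (ac - alphaVec n) ∈ E1 (barCone ac C) :=
    abar_mem_E1_bar hacL haca hnn (hρ₀eq ▸ hρ₀)
  have hsplit : ∀ (q : Fin n → ℚ) (x : Fin (n + 1) → ℚ),
      pairQ (emb q) x = pairQ q (proj x) := by
    intro q x
    rw [pairQ_split, proj_emb, emb_last, zero_mul, add_zero]
  have hprojac : proj ac ∈ dualCone C := by
    intro v hv
    rw [← pairQ_emb]
    exact hnn v hv
  have hprojac_ne : proj ac ≠ 0 := by
    intro h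
    obtain ⟨v, hv, hvne⟩ := hnz
    apply hvne
    rw [pairQ_emb, h, pairQ, ]
    simp
  constructor
  · rintro ⟨ρ, hρE1, ⟨heLat, heρ, hdem⟩, he0, hρα⟩
    have hρlast : ρ (Fin.last n) = 0 := by rwa [pairQ_alpha_right] at hρα
    have helast : e (Fin.last n) = 0 := by
      rw [hρ₀eq, pairQ_neg_left, pairQ_alpha_left] at he0
      linarith
    rcases classify_E1_bar hfg hacL haca hnn hρE1 with h | h | ⟨q, hqE1, rfl⟩
    · exfalso
      have h' := congrFun h (Fin.last n)
      rw [hρlast] at h'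
      simp [alphaVec] at h'
    · exfalso
      have h' := congrFun h (Fin.last n)
      rw [hρlast] at h'
      simp [aL, alphaVec] at h'
      norm_num at h'
    set e' : Fin n → ℚ := proj e with he'def
    have heemb : e = emb e' := (emb_proj e helast).symm
    have hace : 0 ≤ pairQ ac e := by
      have hne : ac - alphaVec n ≠ emb q := by
        intro h
        have h' := congrFun h (Fin.last n)
        rw [emb_last] at h'
        simp [aL, alphaVec] at h'
        norm_num at h'
      have hd := hdem _ habar hne
      rwa [pairQ_sub_left, pairQ_alpha_left, helast, sub_zero] at hd
    refine ⟨⟨e', heemb, ?_⟩, hace⟩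
    rw [DemRoots]
    refine Set.mem_biUnion hqE1 ?_
    refine ⟨isLatticePt_proj heLat, ?_, ?_⟩
    · rw [← hsplit q e]
      exact heρ
    · intro ρ'' hρ''E1 hne
      obtain ⟨v'', hv''C, hface''⟩ := hρ''E1.2
      by_cases hA : pairQ ac (emb v'') = 0
      · have hray : proj ac ∈ raySet ρ'' := by
          rw [hface'']
          refine ⟨hprojac, ?_⟩
          rwa [← pairQ_emb]
        obtain ⟨lam, hlam, hlameq⟩ := hray
        have hlampos : 0 < lam := by
          rcases lt_or_eq_of_le hlam with h | h
          · exact h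
          · exfalso
            apply hprojac_ne
            rw [hlameq, ← h, zero_smul]
        have hkey : pairQ (proj ac) e' = lam * pairQ ρ'' e' := by
          rw [hlameq, pairQ_smul_left]
        have hkey2 : pairQ (proj ac) e' = pairQ ac e := by
          rw [← pairQ_emb, ← heemb]
        by_contra hcon
        push_neg at hcon
        nlinarith
      · have hE1bar : emb ρ'' ∈ E1 (barCone ac C) :=
          emb_mem_E1_bar hρ''E1.1 (mem_dual_of_E1 hρ''E1) hv''C hface'' hA
        have hne' : emb ρ'' ≠ emb q := by
          intro h
          apply hne
          have h' := congrArg proj h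
          rwa [proj_emb, proj_emb] at h'
        have hd := hdem _ hE1bar hne'
        rwa [hsplit, ← he'def] at hd
  · rintro ⟨⟨e', rfl, hroots⟩, hace⟩
    simp only [DemRoots, Set.mem_iUnion] at hroots
    obtain ⟨ρ', hρ'E1, he'latt, he'pair, he'dem⟩ := hroots
    obtain ⟨v', hv'C, hface'⟩ := hρ'E1.2
    have hA : pairQ ac (emb v') ≠ 0 := by
      intro hA
      have hray : proj ac ∈ raySet ρ' := by
        rw [hface']
        refine ⟨hprojac, ?_⟩
        rwa [← pairQ_emb]
      obtain ⟨lam, hlam, hlameq⟩ := hray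
      have hlampos : 0 < lam := by
        rcases lt_or_eq_of_le hlam with h | h
        · exact h
        · exfalso
          apply hprojac_ne
          rw [hlameq, ← h, zero_smul]
      have hkey : pairQ (proj ac) e' = lam * pairQ ρ' e' := by
        rw [hlameq, pairQ_smul_left]
      rw [he'pair, ← pairQ_emb] at hkey
      nlinarith
    have hE1bar : emb ρ' ∈ E1 (barCone ac C) :=
      emb_mem_E1_bar hρ'E1.1 (mem_dual_of_E1 hρ'E1) hv'C hface' hA
    refine ⟨emb ρ', hE1bar, ⟨heL, ?_, ?_⟩, ?_, ?_⟩
    · rw [hsplit, proj_emb]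
      exact he'pair
    · intro τ hτE1 hτne
      rcases classify_E1_bar hfg hacL haca hnn hτE1 with h | h | ⟨q, hqE1, rfl⟩
      · rw [h, pairQ_neg_left, pairQ_alpha_left, emb_last, neg_zero]
      · rw [h, pairQ_sub_left, pairQ_alpha_left, emb_last, sub_zero]
        exact hace
      · have hqne : q ≠ ρ' := by
          intro h
          exact hτne (by rw [h])
        have := he'dem q hqE1 hqne
        rwa [hsplit, proj_emb]
    · rw [hρ₀eq, pairQ_neg_left, pairQ_alpha_left, emb_last, neg_zero]
    · rw [pairQ_alpha_right, emb_last]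

end RootSubgroups
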